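/- If K^+ is the apex-side part of a spherically symmetric convex body K above a hyperplane W, and C^+ is the cone over the base disk K ∩ W with apex Z on the axis such that Vol(C^+) = Vol(K^+), then either K^+ = C^+ or the apex Z does not belong to K^+; equivalently, the cone C^+ is at least as elongated along the axis as K^+. -/

import Mathlib

/-!
If the apex `Z` lies in `K⁺`, convexity of `K` puts the whole cone `C⁺` (the convex hull of
`Z` and the base disk) inside `K⁺`. Equal finite volumes then make `K⁺ \ C⁺` a null set.
Since `K⁺` is convex with nonempty interior (it contains `C⁺`), it is the closure of its
interior, and the open set `interior K⁺ \ C⁺` of measure zero is empty; as `C⁺` is closed,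
`K⁺ ⊆ C⁺`.
-/

open MeasureTheory Pointwise

theorem Convex.subset_of_measure_diff_eq_zero {E : Type*} [AddCommGroup E] [Module ℝ E]
    [TopologicalSpace E] [IsTopologicalAddGroup E] [ContinuousSMul ℝ E] [MeasurableSpace E]
    {μ : Measure E} [μ.IsOpenPosMeasure] {S C : Set E} (hS : Convex ℝ S)
    (hint : (interior S).Nonempty) (hC : IsClosed C) (hnull : μ (S \ C) = 0) : S ⊆ C := by
  have hinterior : interior S ⊆ C := Set.sdiff_eq_empty.1 <|
    (isOpen_interior.sdiff hC).eq_empty_of_measure_zero <|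
      measure_mono_null (Set.sdiff_subset_sdiff_left interior_subset) hnull
  calc S ⊆ closure S := subset_closure
    _ = closure (interior S) := (hS.closure_interior_eq_closure_of_nonempty_interior hint).symm
    _ ⊆ C := closure_minimal hinterior hC

section SolidCone

variable {E : Type*} [NormedAddCommGroup E]

/-- The cone with apex `(0, a)` over the closed ball of radius `r` at height `c`. -/
def solidCone (r c a : ℝ) : Set (E × ℝ) :=
  {p | p.2 ∈ Set.Icc c a ∧ ‖p.1‖ ≤ (a - p.2) / (a - c) * r}

theorem isClosed_solidCone (r c a : ℝ) : IsClosed (solidCone r c a : Set (E × ℝ)) :=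
  (isClosed_Icc.preimage continuous_snd).inter <|
    isClosed_le (continuous_norm.comp continuous_fst) (by fun_prop)

theorem interior_solidCone_nonempty {r c a : ℝ} (hr : 0 < r) (hca : c < a) :
    (interior (solidCone r c a : Set (E × ℝ))).Nonempty := by
  let U : Set (E × ℝ) := {p | c < p.2 ∧ p.2 < a ∧ ‖p.1‖ < (a - p.2) / (a - c) * r}
  have hU : IsOpen U :=
    (isOpen_lt continuous_const continuous_snd).inter <|
      (isOpen_lt continuous_snd continuous_const).inter <|
        isOpen_lt (continuous_norm.comp continuous_fst) (by fun_prop)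
  have hUsub : U ⊆ solidCone r c a := fun p ⟨hc, ha, hp⟩ => ⟨⟨hc.le, ha.le⟩, hp.le⟩
  have hmid : ((0 : E), (c + a) / 2) ∈ U := by
    refine ⟨by linarith, by linarith, ?_⟩
    have : 0 < a - (c + a) / 2 := by linarith
    simpa using mul_pos (div_pos this (sub_pos.2 hca)) hr
  exact ⟨_, interior_maximal hUsub hU hmid⟩

theorem Convex.solidCone_subset [NormedSpace ℝ E] {K : Set (E × ℝ)} (hK : Convex ℝ K)
    {r c a : ℝ} (hr : 0 ≤ r) (hca : c < a)
    (hbase : Metric.closedBall 0 r ⊆ {x | (x, c) ∈ K}) (hapex : ((0 : E), a) ∈ K) :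
    solidCone r c a ⊆ K := by
  rintro ⟨y, s⟩ ⟨⟨hcs, hsa⟩, hy⟩
  set t := (a - s) / (a - c) with ht
  have hac : 0 < a - c := sub_pos.2 hca
  have ht0 : 0 ≤ t := div_nonneg (by linarith) hac.le
  have ht1 : t ≤ 1 := (div_le_one hac).2 (by linarith)
  obtain ⟨x, hx, rfl⟩ : y ∈ t • Metric.closedBall (0 : E) r := by
    rw [smul_closedBall _ _ hr, smul_zero, Real.norm_of_nonneg ht0]
    simpa using hy
  have hs : s = t * c + (1 - t) * a := by
    rw [ht]; field_simp; ring
  simpa [hs] using hK (hbase hx) hapex ht0 (sub_nonneg.2 ht1) (add_sub_cancel t 1)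

end SolidCone

theorem cone_apex_not_in_body_general (n : ℕ)
    (K : Set (EuclideanSpace ℝ (Fin n) × ℝ))
    (hKc : IsCompact K) (hKconv : Convex ℝ K)
    (c R0 A : ℝ) (hR0 : 0 < R0) (hA : c < A)
    (hbase : {x | (x, c) ∈ K} = Metric.closedBall (0 : EuclideanSpace ℝ (Fin n)) R0)
    (Kp Cp : Set (EuclideanSpace ℝ (Fin n) × ℝ))
    (hKp : Kp = K ∩ {p | c ≤ p.2})
    (hCp : Cp = {p | p.2 ∈ Set.Icc c A ∧ ‖p.1‖ ≤ (A - p.2) / (A - c) * R0})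
    (hveq : volume Cp = volume Kp) :
    Kp = Cp ∨ ((0 : EuclideanSpace ℝ (Fin n)), A) ∉ Kp := by
  rw [or_iff_not_imp_right, not_not]
  intro hZ
  obtain rfl : Cp = solidCone R0 c A := hCp
  subst hKp
  have hCK : solidCone R0 c A ⊆ K ∩ {p | c ≤ p.2} :=
    Set.subset_inter (hKconv.solidCone_subset hR0.le hA hbase.ge hZ.1) fun p hp => hp.1.1
  have hconv : Convex ℝ (K ∩ {p | c ≤ p.2}) :=
    hKconv.inter (convex_halfSpace_ge (LinearMap.snd ℝ _ _).isLinear c)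
  have hnull : volume ((K ∩ {p | c ≤ p.2}) \ solidCone R0 c A) = 0 := by
    rw [measure_sdiff hCK (isClosed_solidCone R0 c A).nullMeasurableSet, hveq, tsub_self]
    exact hveq ▸ (hKc.inter_right (isClosed_le continuous_const continuous_snd)).measure_lt_top.ne
  refine (hconv.subset_of_measure_diff_eq_zero ?_ (isClosed_solidCone R0 c A) hnull).antisymm hCK
  exact (interior_solidCone_nonempty hR0 hA).mono (interior_mono hCK)

/-- If C⁺ is the cone over the base disk K ∩ W with apex Z on the axis such that
Vol(C⁺) = Vol(K⁺), then either K⁺ = C⁺ or the apex Z does not belong to K⁺. -/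
theorem cone_apex_not_in_body (n : ℕ)
    (K : Set (EuclideanSpace ℝ (Fin n) × ℝ))
    (hKc : IsCompact K) (hKconv : Convex ℝ K) (hvol : 0 < (volume K).toReal)
    (hsym : ∀ lam : ℝ, {x | (x, lam) ∈ K} = ∅ ∨
      ∃ ρ : ℝ, 0 ≤ ρ ∧ {x | (x, lam) ∈ K}
        = Metric.closedBall (0 : EuclideanSpace ℝ (Fin n)) ρ)
    (c R0 A : ℝ) (hR0 : 0 < R0) (hA : c < A)
    (hbase : {x | (x, c) ∈ K} = Metric.closedBall (0 : EuclideanSpace ℝ (Fin n)) R0)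
    (Kp Cp : Set (EuclideanSpace ℝ (Fin n) × ℝ))
    (hKp : Kp = K ∩ {p | c ≤ p.2})
    (hCp : Cp = {p | p.2 ∈ Set.Icc c A ∧ ‖p.1‖ ≤ (A - p.2) / (A - c) * R0})
    (hveq : volume Cp = volume Kp) :
    Kp = Cp ∨ ((0 : EuclideanSpace ℝ (Fin n)), A) ∉ Kp :=
  cone_apex_not_in_body_general n K hKc hKconv c R0 A hR0 hA hbase Kp Cp hKp hCp hveq
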